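/- Eilenberg–Zilber lemma: in any simplicial set X, every simplex x ∈ Xₙ can be written uniquely as x = X(σ)(y) where σ : [n] ↠ [m] is a surjective order-preserving map and y ∈ Xₘ is a non-degenerate simplex. -/

import Mathlib

open CategoryTheory Simplicial Opposite

/-- A simplex `y ∈ Xₘ` is non-degenerate if it is not in the image of `X(τ)` for any
surjection `τ : [m] ↠ [k]` with `k < m`. -/
def SSet.IsNondegenerate (X : SSet.{u}) {m : ℕ} (y : X _⦋m⦌) : Prop :=
  ∀ (k : ℕ), k < m → ∀ (τ : (⦋m⦌ : SimplexCategory) ⟶ ⦋k⦌), Epi τ →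
    ∀ z : X _⦋k⦌, X.map τ.op z ≠ y

namespace SSet

lemma isNondegenerate_iff_mem_nonDegenerate (X : SSet.{u}) {m : ℕ} (y : X _⦋m⦌) :
    X.IsNondegenerate y ↔ y ∈ X.nonDegenerate m := by
  simp only [IsNondegenerate, mem_nonDegenerate_iff_notMem_degenerate, mem_degenerate_iff,
    Set.mem_range]
  grind

end SSet

/-- Eilenberg–Zilber lemma: every simplex `x ∈ Xₙ` of a simplicial set can be written
uniquely as `x = X(σ)(y)` with `σ : [n] ↠ [m]` a surjective order-preserving map and
`y ∈ Xₘ` non-degenerate. -/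
theorem eilenberg_zilber (X : SSet.{u}) (n : ℕ) (x : X _⦋n⦌) :
    ∃! p : Σ (m : ℕ), ((⦋n⦌ : SimplexCategory) ⟶ ⦋m⦌) × X _⦋m⦌,
      Epi p.2.1 ∧ X.IsNondegenerate p.2.2 ∧ X.map p.2.1.op p.2.2 = x := by
  simp only [SSet.isNondegenerate_iff_mem_nonDegenerate]
  obtain ⟨m, σ, hσ, y, hx⟩ := X.exists_nonDegenerate x
  refine ⟨⟨m, σ, y⟩, ⟨hσ, y.2, hx.symm⟩, ?_⟩
  rintro ⟨m', σ', y'⟩ ⟨hσ', hy', hx'⟩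
  obtain rfl : m' = m := X.unique_nonDegenerate_dim x σ' ⟨y', hy'⟩ hx'.symm σ y hx
  obtain rfl : ⟨y', hy'⟩ = y := X.unique_nonDegenerate_simplex x σ' ⟨y', hy'⟩ hx'.symm σ y hx
  obtain rfl : σ' = σ := X.unique_nonDegenerate_map x σ' ⟨y', hy'⟩ hx'.symm σ _ hx
  rfl
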